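/- Let K be the field of fractions of ℚ[x₀,x₁,x₂,x₃,x₄,x₅] and let τ'₁, τ'₂, τ'₃ be the maps on K⁶ defined by: τ'₁ replaces (v₀,v₁) by ((v₂v₄+v₃v₅)/v₁, (v₂v₄+v₃v₅)/v₀); τ'₂ replaces (v₂,v₃) by ((v₁v₄+v₀v₅)/v₃, (v₁v₄+v₀v₅)/v₂); τ'₃ replaces (v₄,v₅) by ((v₀v₂+v₁v₃)/v₅, (v₀v₂+v₁v₃)/v₄); each fixes the remaining entries. Let X = (x₀,…,x₅). Then for every finite word w with letters in {1,2,3} and every index i ∈ {0,…,5}, the i-th entry v of the tuple obtained by applying the maps along w to X is a Laurent polynomial with nonnegative coefficients in x₀,…,x₅; that is, there exist a polynomial p ∈ ℚ[x₀,…,x₅] all of whose coefficients are nonnegative and natural numbers d₀,…,d₅ such that v · x₀^{d₀}x₁^{d₁}x₂^{d₂}x₃^{d₃}x₄^{d₄}x₅^{d₅} = p in K. -/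

import Mathlib

noncomputable section

/-- The polynomial ring ℚ[x₀,…,x₅]. -/
abbrev P : Type := MvPolynomial (Fin 6) ℚ

/-- K = Frac(ℚ[x₀,…,x₅]). -/
abbrev K : Type := FractionRing P

/-- The images of the variables x₀,…,x₅ in K. -/
def x (i : Fin 6) : K := algebraMap P K (MvPolynomial.X i)

/-- τ'₁ : replaces (v₀, v₁) by ((v₂v₄+v₃v₅)/v₁, (v₂v₄+v₃v₅)/v₀). -/
def tau1 (v : Fin 6 → K) : Fin 6 → K := fun k =>
  if k = 0 then (v 2 * v 4 + v 3 * v 5) / v 1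
  else if k = 1 then (v 2 * v 4 + v 3 * v 5) / v 0
  else v k

/-- τ'₂ : replaces (v₂, v₃) by ((v₁v₄+v₀v₅)/v₃, (v₁v₄+v₀v₅)/v₂). -/
def tau2 (v : Fin 6 → K) : Fin 6 → K := fun k =>
  if k = 2 then (v 1 * v 4 + v 0 * v 5) / v 3
  else if k = 3 then (v 1 * v 4 + v 0 * v 5) / v 2
  else v k

/-- τ'₃ : replaces (v₄, v₅) by ((v₀v₂+v₁v₃)/v₅, (v₀v₂+v₁v₃)/v₄). -/
def tau3 (v : Fin 6 → K) : Fin 6 → K := fun k =>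
  if k = 4 then (v 0 * v 2 + v 1 * v 3) / v 5
  else if k = 5 then (v 0 * v 2 + v 1 * v 3) / v 4
  else v k

/-- τ' indexed by Fin 3: `tau i` is τ'_{i+1}. -/
def tau : Fin 3 → (Fin 6 → K) → (Fin 6 → K)
  | 0 => tau1
  | 1 => tau2
  | 2 => tau3

/-- The initial labeled seed X = (x₀,…,x₅). -/
def X0 : Fin 6 → K := x

/-- Apply the maps τ'₍a₁₎, …, τ'₍aₙ₎ along the word `w` in left-to-right order. -/
def applyWord (w : List (Fin 3)) (v : Fin 6 → K) : Fin 6 → K :=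
  w.foldl (fun u a => tau a u) v

/-- A = (x₂x₄+x₃x₅)/(x₀x₁). -/
def A : K := (x 2 * x 4 + x 3 * x 5) / (x 0 * x 1)

/-- B = (x₁x₄+x₀x₅)/(x₂x₃). -/
def B : K := (x 1 * x 4 + x 0 * x 5) / (x 2 * x 3)

/-- C = (x₀x₂+x₁x₃)/(x₄x₅). -/
def C : K := (x 0 * x 2 + x 1 * x 3) / (x 4 * x 5)

/-!
Along any τ-mutation sequence every seed keeps the factorized shape
`v (2r) = x (2r) * M r`, `v (2r+1) = x (2r+1) * M r`, where `M r` is a Laurent monomial in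
`A, B, C`: mutating the pair `a` turns `M a` into `R * M (a+1) * M (a+2) / M a` (indices mod 3),
where `R` is the one of `A, B, C` attached to `a`. So only the integer exponent matrix of the
`M r` evolves, column by column by Vieta involutions of the quadratic form
`p² + q² + s² - pq - qs - sp - p`. That form vanishes on the initial (zero) exponents, and its
integer zeros are nonnegative; hence every entry is `x i` times a product of natural powers of
the positive Laurent polynomials `A, B, C`.
-/

namespace DelPezzo3

open MvPolynomial (X map map_X eval)

/-- Laurent polynomials in `x₀,…,x₅` with coefficients in `ℕ`. -/
def positiveLaurent : Submonoid K where
  carrier := {v | ∃ (q : MvPolynomial (Fin 6) ℕ) (d : Fin 6 → ℕ),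
    v * ∏ j, x j ^ d j = algebraMap P K (map (Nat.castRingHom ℚ) q)}
  one_mem' := ⟨1, 0, by simp⟩
  mul_mem' := by
    rintro u v ⟨p, d, hu⟩ ⟨q, d', hv⟩
    refine ⟨p * q, d + d', ?_⟩
    simp only [Pi.add_apply, pow_add, Finset.prod_mul_distrib, map_mul, ← hu, ← hv]
    ring

lemma algebraMap_map_mem_positiveLaurent (q : MvPolynomial (Fin 6) ℕ) :
    algebraMap P K (map (Nat.castRingHom ℚ) q) ∈ positiveLaurent :=
  ⟨q, 0, by simp⟩

lemma x_ne_zero (i : Fin 6) : x i ≠ 0 := by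
  simp [x]

lemma x_mem_positiveLaurent (i : Fin 6) : x i ∈ positiveLaurent := by
  have h := algebraMap_map_mem_positiveLaurent (X i)
  rw [map_X] at h
  exact h

lemma inv_x_mem_positiveLaurent (a : Fin 6) : (x a)⁻¹ ∈ positiveLaurent := by
  refine ⟨1, Pi.single a 1, ?_⟩
  rw [Fintype.prod_eq_single a fun j hj => by simp [hj]]
  simp [x_ne_zero]

lemma binomial_mem_positiveLaurent (a b c d : Fin 6) :
    x a * x b + x c * x d ∈ positiveLaurent := by
  have h := algebraMap_map_mem_positiveLaurent (X a * X b + X c * X d)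
  simp only [map_add, map_mul, map_X] at h
  exact h

lemma binomial_div_mem_positiveLaurent (a b c d e f : Fin 6) :
    (x a * x b + x c * x d) / (x e * x f) ∈ positiveLaurent := by
  rw [div_eq_mul_inv, mul_inv]
  exact mul_mem (binomial_mem_positiveLaurent a b c d)
    (mul_mem (inv_x_mem_positiveLaurent e) (inv_x_mem_positiveLaurent f))

lemma binomial_ne_zero (a b c d : Fin 6) : x a * x b + x c * x d ≠ 0 := by
  have h : eval (fun _ => (1 : ℚ)) (X a * X b + X c * X d) ≠ 0 := by norm_num
  contrapose! h
  have : X a * X b + X c * X d = (0 : P) := by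
    apply IsFractionRing.injective P K
    simpa [x] using h
  simp [this]

def ratio : Fin 3 → K := ![A, B, C]

lemma ratio_ne_zero (k : Fin 3) : ratio k ≠ 0 := by
  fin_cases k <;>
    exact div_ne_zero (binomial_ne_zero _ _ _ _) (mul_ne_zero (x_ne_zero _) (x_ne_zero _))

lemma ratio_mem_positiveLaurent (k : Fin 3) : ratio k ∈ positiveLaurent := by
  fin_cases k <;> exact binomial_div_mem_positiveLaurent _ _ _ _ _ _

def ratioPow (c : Fin 3 → ℤ) : K := ∏ k, ratio k ^ c k

lemma ratioPow_ne_zero (c : Fin 3 → ℤ) : ratioPow c ≠ 0 :=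
  Finset.prod_ne_zero_iff.mpr fun k _ => zpow_ne_zero _ (ratio_ne_zero k)

lemma ratioPow_add (c c' : Fin 3 → ℤ) : ratioPow (c + c') = ratioPow c * ratioPow c' := by
  simp only [ratioPow, Pi.add_apply, zpow_add₀ (ratio_ne_zero _), Finset.prod_mul_distrib]

lemma ratioPow_sub (c c' : Fin 3 → ℤ) : ratioPow (c - c') = ratioPow c / ratioPow c' := by
  simp only [ratioPow, Pi.sub_apply, zpow_sub₀ (ratio_ne_zero _), Finset.prod_div_distrib]

lemma ratioPow_single (a : Fin 3) : ratioPow (Pi.single a 1) = ratio a := by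
  rw [ratioPow, Fintype.prod_eq_single a fun k hk => by simp [hk]]
  simp

lemma ratioPow_mem_positiveLaurent {c : Fin 3 → ℤ} (hc : 0 ≤ c) :
    ratioPow c ∈ positiveLaurent := by
  refine prod_mem fun k _ => ?_
  rw [← Int.toNat_of_nonneg (hc k), zpow_natCast]
  exact pow_mem (ratio_mem_positiveLaurent k) _

/-- Row `r` of `e` is the exponent vector of `A, B, C` shared by the pair `v (2r), v (2r+1)`. -/
def seed (e : Fin 3 → Fin 3 → ℤ) : Fin 6 → K :=
  fun j => x j * ratioPow (e (![0, 0, 1, 1, 2, 2] j))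

/-- In `Fin 3`, `a + 1` and `a + 2` are the two pairs other than `a`. -/
def mutateExponents (a : Fin 3) (e : Fin 3 → Fin 3 → ℤ) : Fin 3 → Fin 3 → ℤ :=
  Function.update e a (Pi.single a 1 + e (a + 1) + e (a + 2) - e a)

lemma ratioPow_mutateExponents_self (a : Fin 3) (e : Fin 3 → Fin 3 → ℤ) :
    ratioPow (mutateExponents a e a) =
      ratio a * ratioPow (e (a + 1)) * ratioPow (e (a + 2)) / ratioPow (e a) := by
  rw [mutateExponents, Function.update_self, ratioPow_sub, ratioPow_add, ratioPow_add,
    ratioPow_single]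

lemma mutateExponents_of_ne {a r : Fin 3} (h : r ≠ a) (e : Fin 3 → Fin 3 → ℤ) :
    mutateExponents a e r = e r :=
  Function.update_of_ne h _ _

lemma tau_seed (a : Fin 3) (e : Fin 3 → Fin 3 → ℤ) :
    tau a (seed e) = seed (mutateExponents a e) := by
  funext j
  have hself := ratioPow_mutateExponents_self a e
  fin_cases a <;> fin_cases j <;>
    simp [tau, tau1, tau2, tau3, seed, mutateExponents_of_ne] at hself ⊢
  all_goals
    rw [hself]
    simp only [ratio, A, B, C, Matrix.cons_val_zero, Matrix.cons_val_one, Matrix.cons_val_two,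
      Matrix.head_cons, Matrix.tail_cons]
    field_simp [x_ne_zero, ratioPow_ne_zero]

lemma seed_mem_positiveLaurent {e : Fin 3 → Fin 3 → ℤ} (he : ∀ r, 0 ≤ e r) (j : Fin 6) :
    seed e j ∈ positiveLaurent :=
  mul_mem (x_mem_positiveLaurent j) (ratioPow_mem_positiveLaurent (he _))

lemma applyWord_seed (w : List (Fin 3)) (e : Fin 3 → Fin 3 → ℤ) :
    applyWord w (seed e) = seed (w.foldl (fun e a => mutateExponents a e) e) :=
  List.foldl_hom seed fun e a => tau_seed a e

def markovForm (k : Fin 3) (c : Fin 3 → ℤ) : ℤ :=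
  c k ^ 2 + c (k + 1) ^ 2 + c (k + 2) ^ 2 - c k * c (k + 1) - c (k + 1) * c (k + 2)
    - c (k + 2) * c k - c k

/-- As a polynomial in `c a` the form is monic with linear coefficient
`-(c (a+1) + c (a+2) + δₐₖ)`, so mutation swaps the two roots. -/
lemma markovForm_mutateExponents (a k : Fin 3) (e : Fin 3 → Fin 3 → ℤ) :
    markovForm k (fun r => mutateExponents a e r k) = markovForm k (fun r => e r k) := by
  fin_cases a <;> fin_cases k <;> simp [markovForm, mutateExponents] <;> ring

lemma markovForm_foldl_mutateExponents (w : List (Fin 3)) (e : Fin 3 → Fin 3 → ℤ) (k : Fin 3) :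
    markovForm k (fun r => w.foldl (fun e a => mutateExponents a e) e r k) =
      markovForm k (fun r => e r k) := by
  induction w generalizing e with
  | nil => rfl
  | cons a w ih => rw [List.foldl_cons, ih, markovForm_mutateExponents]

lemma nonneg_of_sq_add_sq_add_sq_sub_eq {p q r : ℤ}
    (h : p ^ 2 + q ^ 2 + r ^ 2 - p * q - q * r - r * p = p) : 0 ≤ p ∧ 0 ≤ q ∧ 0 ≤ r := by
  refine ⟨?_, ?_, ?_⟩ <;>
    nlinarith [sq_nonneg (p - q), sq_nonneg (q - r), sq_nonneg (r - p),
      sq_nonneg (p - q - 1), sq_nonneg (p - r - 1)]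

lemma nonneg_of_markovForm_eq_zero {k : Fin 3} {c : Fin 3 → ℤ} (h : markovForm k c = 0) :
    0 ≤ c := by
  obtain ⟨h0, h1, h2⟩ := nonneg_of_sq_add_sq_add_sq_sub_eq (sub_eq_zero.mp h)
  intro r
  obtain rfl | rfl | rfl : r = k ∨ r = k + 1 ∨ r = k + 2 := by
    fin_cases k <;> fin_cases r <;> decide
  exacts [h0, h1, h2]

def exponentsOfWord (w : List (Fin 3)) : Fin 3 → Fin 3 → ℤ :=
  w.foldl (fun e a => mutateExponents a e) 0

lemma applyWord_X0 (w : List (Fin 3)) : applyWord w X0 = seed (exponentsOfWord w) := by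
  have hX0 : X0 = seed 0 := by
    funext j
    simp [seed, ratioPow, X0]
  rw [hX0, applyWord_seed, exponentsOfWord]

lemma exponentsOfWord_nonneg (w : List (Fin 3)) (r : Fin 3) : 0 ≤ exponentsOfWord w r :=
  fun k => nonneg_of_markovForm_eq_zero (k := k) (c := fun r => exponentsOfWord w r k)
    (by rw [exponentsOfWord, markovForm_foldl_mutateExponents]; simp [markovForm]) r

end DelPezzo3

theorem positive_laurent (w : List (Fin 3)) (i : Fin 6) :
    ∃ p : P, (∀ m, 0 ≤ p.coeff m) ∧
      ∃ d : Fin 6 → ℕ,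
        applyWord w X0 i * ∏ j : Fin 6, x j ^ d j = algebraMap P K p := by
  have hmem : applyWord w X0 i ∈ DelPezzo3.positiveLaurent := by
    rw [DelPezzo3.applyWord_X0]
    exact DelPezzo3.seed_mem_positiveLaurent (DelPezzo3.exponentsOfWord_nonneg w) i
  obtain ⟨q, d, hq⟩ := hmem
  exact ⟨MvPolynomial.map (Nat.castRingHom ℚ) q, fun m => by simp [MvPolynomial.coeff_map], d, hq⟩
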